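/- arXiv:1804.02540 — 3 statements merged into one kernel-verified Lean document; each statement's English description precedes it below -/
import Mathlib

section
/- Let S be a proof-net in the sense of the partition switching which contains no terminal ⅋^k-link (for any nonzero k) and which contains n > 1 terminal C-links C₁,…,Cₙ (terminal ⊗-links being counted among the terminal C-links). If a terminal C-link with conclusion C_i(A_{i1},…,A_{im}) is non-splitting, then there exist a non-terminal node l with l ≠ C_i(A_{i1},…,A_{im}) and paths p₁,…,p_m which start from the node C_i(A_{i1},…,A_{im}), pass through A_{i1},…,A_{im} respectively, and all meet at l. -/
/-! ## Partitions of `{1,…,n}`, meeting graphs, orthogonality (Danos–Regnier) -/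

/-- A partition of `{1,…,n}`, represented as a `Finpartition` of `Fin n`. -/
abbrev FinPartition (n : ℕ) := Finpartition (Finset.univ : Finset (Fin n))

/-- The (simple graph underlying the) meeting graph `G(p,q)` of two partitions of `{1,…,n}`:
its vertices are the classes of `p` together with the classes of `q`, and a class of `p` is
adjacent to a class of `q` iff some `i ∈ {1,…,n}` belongs to both (in the meeting multigraph
there is one edge for each such `i`). -/
def meetingGraph {n : ℕ} (p q : FinPartition n) :
    SimpleGraph ({c // c ∈ p.parts} ⊕ {d // d ∈ q.parts}) :=
  SimpleGraph.fromRel fun a b =>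
    ∃ (c : {c // c ∈ p.parts}) (d : {d // d ∈ q.parts}),
      ((c : Finset (Fin n)) ∩ (d : Finset (Fin n))).Nonempty ∧
      a = Sum.inl c ∧ b = Sum.inr d

/-- `p ⊥ q` : the meeting multigraph `G(p,q)` is connected and acyclic.  The meeting
multigraph has exactly `n` edges (one per element of `{1,…,n}`), and a connected multigraph
is acyclic iff its number of edges is exactly one less than its number of vertices; so
`G(p,q)` is connected and acyclic iff it is connected (equivalently, the underlying simple
graph is connected) and `n + 1 = (#classes of p) + (#classes of q)`. -/
def Finpartition.Orthogonal {n : ℕ} (p q : FinPartition n) : Prop :=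
  (meetingGraph p q).Connected ∧ n + 1 = p.parts.card + q.parts.card

/-- Orthogonality of two partition sets: `P ⊥ Q` iff `p ⊥ q` for all `p ∈ P`, `q ∈ Q`. -/
def orthSet {n : ℕ} (P Q : Set (FinPartition n)) : Prop :=
  ∀ p ∈ P, ∀ q ∈ Q, p.Orthogonal q

/-- `P^⊥`, the maximal partition set orthogonal to `P`. -/
def orthCompl {n : ℕ} (P : Set (FinPartition n)) : Set (FinPartition n) :=
  {q | ∀ p ∈ P, p.Orthogonal q}

/-- The partition set of `⊗ⁿ` : the single partition of `{1,…,n}` into singleton classes. -/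
def IsTensorSet {n : ℕ} (R : Set (FinPartition n)) : Prop :=
  R = {p : FinPartition n | ∀ c ∈ p.parts, c.card = 1}

/-- The partition set of `⅋ⁿ` : the single partition of `{1,…,n}` with one class. -/
def IsParSet {n : ℕ} (R : Set (FinPartition n)) : Prop :=
  R = {p : FinPartition n | p.parts = {Finset.univ}}

/-! ## Generalized multiplicative connectives and the sequent calculus `MLL(Cᵢ)` -/

/-- An `n`-ary generalized (multiplicative) connective `C` together with its dual `C*`:
a pair of nonempty finite partition sets of `{1,…,n}` with `(P_C)^⊥ = P_{C*}` and
`(P_{C*})^⊥ = P_C`.  `rules` is the partition set of the introduction (right) rules of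
`C`, and `dualRules` the one of its dual `C*`. -/
structure GenConn : Type where
  arity : ℕ
  rules : Set (FinPartition arity)
  dualRules : Set (FinPartition arity)
  rules_nonempty : rules.Nonempty
  rules_finite : rules.Finite
  dualRules_nonempty : dualRules.Nonempty
  dualRules_finite : dualRules.Finite
  orth : orthCompl rules = dualRules
  orth' : orthCompl dualRules = rules

/-- Formulas of `MLL(Cᵢ)`: built from atoms `P` and their duals `~P` by `⊗`, `⅋` and the
generalized connectives `Cᵢ` (with constructor `conn i`) and their duals `Cᵢ*` (with
constructor `dconn i`), where `i` ranges over a signature `I` and `Csig i` records the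
arity and the partition sets of `Cᵢ`. -/
inductive Formula (I : Type) (Csig : I → GenConn) : Type
  | pos : ℕ → Formula I Csig
  | neg : ℕ → Formula I Csig
  | tens : Formula I Csig → Formula I Csig → Formula I Csig
  | parr : Formula I Csig → Formula I Csig → Formula I Csig
  | conn : (i : I) → (Fin (Csig i).arity → Formula I Csig) → Formula I Csig
  | dconn : (i : I) → (Fin (Csig i).arity → Formula I Csig) → Formula I Csig

/-- The dual `~A` of a formula, extended by De Morgan and
`~(Cᵢ(A₁,…,Aₘ)) = Cᵢ*(~A₁,…,~Aₘ)`. -/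
def Formula.dual {I : Type} {Csig : I → GenConn} : Formula I Csig → Formula I Csig
  | .pos m => .neg m
  | .neg m => .pos m
  | .tens A B => .parr A.dual B.dual
  | .parr A B => .tens A.dual B.dual
  | .conn i A => .dconn i fun k => (A k).dual
  | .dconn i A => .conn i fun k => (A k).dual

/-- Provability in the one-sided sequent calculus `MLL(Cᵢ)` (sequents are multisets of
formulas).  The rules are the axiom `⊢ P, ~P` for atomic `P`, the cut rule (allowed only
when `cutEnabled = true`), the `⊗`- and `⅋`-rules of MLL, and, for each generalized
connective `Cᵢ` and each partition `p ∈ P_{Cᵢ}` with classes `c`, the introduction rule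
with premises `⊢ Γ_c, A_{c₁},…,A_{cₘ}` (one for each class `c` of `p`) and conclusion
`⊢ Γ₁,…,Γ_k, Cᵢ(A₁,…,Aₘ)`; dually for `Cᵢ*` using `p ∈ P_{Cᵢ*}`. -/
inductive Provable {I : Type} {Csig : I → GenConn} (cutEnabled : Bool) :
    Multiset (Formula I Csig) → Prop
  | ax (m : ℕ) : Provable cutEnabled {Formula.pos m, Formula.neg m}
  | cut (A : Formula I Csig) (Γ Δ : Multiset (Formula I Csig)) (hcut : cutEnabled = true) :
      Provable cutEnabled (A ::ₘ Γ) → Provable cutEnabled (A.dual ::ₘ Δ) →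
      Provable cutEnabled (Γ + Δ)
  | tens (A B : Formula I Csig) (Γ Δ : Multiset (Formula I Csig)) :
      Provable cutEnabled (A ::ₘ Γ) → Provable cutEnabled (B ::ₘ Δ) →
      Provable cutEnabled (Formula.tens A B ::ₘ (Γ + Δ))
  | parr (A B : Formula I Csig) (Γ : Multiset (Formula I Csig)) :
      Provable cutEnabled (A ::ₘ B ::ₘ Γ) →
      Provable cutEnabled (Formula.parr A B ::ₘ Γ)
  | conn (i : I) (A : Fin (Csig i).arity → Formula I Csig)
      (p : FinPartition (Csig i).arity) (hp : p ∈ (Csig i).rules)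
      (Γ : {c // c ∈ p.parts} → Multiset (Formula I Csig)) :
      (∀ c : {c // c ∈ p.parts},
        Provable cutEnabled (Γ c + Multiset.map A (c : Finset (Fin (Csig i).arity)).val)) →
      Provable cutEnabled (Formula.conn i A ::ₘ ∑ c : {c // c ∈ p.parts}, Γ c)
  | dconn (i : I) (A : Fin (Csig i).arity → Formula I Csig)
      (p : FinPartition (Csig i).arity) (hp : p ∈ (Csig i).dualRules)
      (Γ : {c // c ∈ p.parts} → Multiset (Formula I Csig)) :
      (∀ c : {c // c ∈ p.parts},
        Provable cutEnabled (Γ c + Multiset.map A (c : Finset (Fin (Csig i).arity)).val)) →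
      Provable cutEnabled (Formula.dconn i A ::ₘ ∑ c : {c // c ∈ p.parts}, Γ c)

/-! ## Proof structures for `MLL(Cᵢ)` -/

/-- The kinds of links of a proof-structure for `MLL(Cᵢ)`: axiom links, cut links,
`⊗`-links, `⅋`-links, `Cᵢ`-links and `Cᵢ*`-links. -/
inductive LinkKind (I : Type) : Type
  | ax : LinkKind I
  | cut : LinkKind I
  | tens : LinkKind I
  | parr : LinkKind I
  | conn : I → LinkKind I
  | dconn : I → LinkKind I

/-- The raw data of a proof-structure: a graph whose nodes are labelled by formulas and
whose edges are organized into links; each link has a kind, an (ordered) list of premise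
nodes and a list of conclusion nodes. -/
structure PrePS (I : Type) (Csig : I → GenConn) : Type 1 where
  Node : Type
  label : Node → Formula I Csig
  Link : Type
  kind : Link → LinkKind I
  prem : Link → List Node
  concl : Link → List Node

/-- A proof-structure for `MLL(Cᵢ)`: a nonempty finite graph of formula-labelled nodes
organized into axiom links (two conclusions `A` and `~A`, no premises), cut links (two
premises `A` and `~A`, no conclusion), `⊗`- and `⅋`-links, and `C`-links (premises
`A₁,…,Aₘ`, conclusion `Cᵢ(A₁,…,Aₘ)`, resp. `Cᵢ*(A₁,…,Aₘ)`), such that each node is the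
premise of at most one link and the conclusion of exactly one link. -/
structure ProofStructure (I : Type) (Csig : I → GenConn) : Type 1 where
  pre : PrePS I Csig
  node_finite : Finite pre.Node
  node_nonempty : Nonempty pre.Node
  link_finite : Finite pre.Link
  wf_ax : ∀ l, pre.kind l = .ax → pre.prem l = [] ∧
      ∃ a b, pre.concl l = [a, b] ∧ pre.label b = (pre.label a).dual
  wf_cut : ∀ l, pre.kind l = .cut → pre.concl l = [] ∧
      ∃ a b, pre.prem l = [a, b] ∧ pre.label b = (pre.label a).dual
  wf_tens : ∀ l, pre.kind l = .tens → ∃ a b c, pre.prem l = [a, b] ∧ pre.concl l = [c] ∧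
      pre.label c = .tens (pre.label a) (pre.label b)
  wf_parr : ∀ l, pre.kind l = .parr → ∃ a b c, pre.prem l = [a, b] ∧ pre.concl l = [c] ∧
      pre.label c = .parr (pre.label a) (pre.label b)
  wf_conn : ∀ l i, pre.kind l = .conn i →
      ∃ (args : Fin (Csig i).arity → pre.Node) (c : pre.Node),
        pre.prem l = List.ofFn args ∧ pre.concl l = [c] ∧
        pre.label c = .conn i fun k => pre.label (args k)
  wf_dconn : ∀ l i, pre.kind l = .dconn i →
      ∃ (args : Fin (Csig i).arity → pre.Node) (c : pre.Node),
        pre.prem l = List.ofFn args ∧ pre.concl l = [c] ∧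
        pre.label c = .dconn i fun k => pre.label (args k)
  prem_nodup : ∀ l, (pre.prem l).Nodup
  concl_nodup : ∀ l, (pre.concl l).Nodup
  concl_unique : ∀ v : pre.Node, ∃! l, v ∈ pre.concl l
  prem_unique : ∀ (v : pre.Node) (l l' : pre.Link),
      v ∈ pre.prem l → v ∈ pre.prem l' → l = l'

namespace PrePS

variable {I : Type} {Csig : I → GenConn}

/-- A node is terminal if it is the premise of no link. -/
def Terminal (S : PrePS I Csig) (v : S.Node) : Prop := ∀ l, v ∉ S.prem l

/-- A link is terminal if all its conclusions are terminal nodes. -/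
def TerminalLink (S : PrePS I Csig) (l : S.Link) : Prop :=
  ∀ v ∈ S.concl l, S.Terminal v

/-- The full graph of a proof-structure: the two conclusions of an axiom link are
adjacent, the two premises of a cut link are adjacent, and each premise of a link is
adjacent to each of its conclusions. -/
def fullGraph (S : PrePS I Csig) : SimpleGraph S.Node :=
  SimpleGraph.fromRel fun a b =>
    (∃ l, S.kind l = .ax ∧ S.concl l = [a, b]) ∨
    (∃ l, S.kind l = .cut ∧ S.prem l = [a, b]) ∨
    (∃ l, a ∈ S.prem l ∧ b ∈ S.concl l)

/-- A terminal link is splitting if removing its (conclusion) node and the incident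
edges separates the proof-structure into disjoint sub-proof-structures, i.e. the induced
graph on the remaining nodes is disconnected. -/
def Splitting (S : PrePS I Csig) (l : S.Link) : Prop :=
  ¬ (S.fullGraph.induce {v : S.Node | v ∉ S.concl l}).Connected

/-- A `⅋ᵏ`-link: a binary `⅋`-link, or a (dual) generalized-connective link whose
partition set is the one of `⅋ᵏ`. -/
def IsParLikeLink (S : PrePS I Csig) (l : S.Link) : Prop :=
  S.kind l = .parr ∨
  (∃ i, S.kind l = .conn i ∧ IsParSet (Csig i).rules) ∨
  (∃ i, S.kind l = .dconn i ∧ IsParSet (Csig i).dualRules)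

/-- A `C`-link (in the wide sense used for splitting): a `⊗`-link or a
generalized-connective link, which is not a `⅋ᵏ`-link. -/
def IsCLink (S : PrePS I Csig) (l : S.Link) : Prop :=
  (S.kind l = .tens ∨ (∃ i, S.kind l = .conn i) ∨ (∃ i, S.kind l = .dconn i)) ∧
  ¬ S.IsParLikeLink l

/-- The correctness graph determined by a selection `sel` of premise positions for each
link: the two conclusions of an axiom link are adjacent, the two premises of a cut link
are adjacent, and the `k`-th premise of a link is adjacent to its conclusion exactly when
`k ∈ sel l`. -/
def selGraph (S : PrePS I Csig) (sel : S.Link → Finset ℕ) : SimpleGraph S.Node :=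
  SimpleGraph.fromRel fun a b =>
    (∃ l, S.kind l = .ax ∧ S.concl l = [a, b]) ∨
    (∃ l, S.kind l = .cut ∧ S.prem l = [a, b]) ∨
    (∃ l, ∃ k ∈ sel l, (S.prem l)[k]? = some a ∧ b ∈ S.concl l)

end PrePS

/-- A transversal of a partition `p`: a set containing exactly one element of each class
of `p`. -/
def IsTransversal {m : ℕ} (p : FinPartition m) (t : Finset (Fin m)) : Prop :=
  ∀ c ∈ p.parts, ∃! x, x ∈ t ∧ x ∈ c

/-- A **partition switching** of a proof-structure: for each generalized-connective link
it selects a partition `p` in the corresponding partition set together with exactly one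
element of each class of `p` (the premise edges to the selected elements are kept, all
other premise edges of the link are deleted).  On a `⊗`-link both premise edges are kept
(the transversal of `{(1),(2)}`), on a `⅋`-link exactly one premise edge is kept
(a transversal of `{(1,2)}`). -/
structure PartitionSwitching {I : Type} {Csig : I → GenConn} (S : PrePS I Csig) where
  sel : S.Link → Finset ℕ
  valid_tens : ∀ l, S.kind l = .tens → sel l = {0, 1}
  valid_parr : ∀ l, S.kind l = .parr → sel l = {0} ∨ sel l = {1}
  valid_conn : ∀ l i, S.kind l = .conn i → ∃ p ∈ (Csig i).rules,
      ∃ t : Finset (Fin (Csig i).arity), IsTransversal p t ∧ sel l = t.image Fin.val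
  valid_dconn : ∀ l i, S.kind l = .dconn i → ∃ p ∈ (Csig i).dualRules,
      ∃ t : Finset (Fin (Csig i).arity), IsTransversal p t ∧ sel l = t.image Fin.val
  valid_other : ∀ l, S.kind l = .ax ∨ S.kind l = .cut → sel l = ∅

/-- A proof-structure is a **proof-net in the sense of the partition switching** iff for
every partition switching the associated correctness graph is connected and acyclic. -/
def PrePS.PartitionProofNet {I : Type} {Csig : I → GenConn} (S : PrePS I Csig) : Prop :=
  ∀ sw : PartitionSwitching S,
    (S.selGraph sw.sel).Connected ∧ (S.selGraph sw.sel).IsAcyclic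

/-! Removing the terminal conclusion `c` of a non-splitting link leaves a
connected graph, so every premise `a` is linked to the first premise `a₁` by a path avoiding
`c`; prefixing the edge `c — a` gives a path from `c` through `a` to `w := a₁`.  That `l` has
a premise at all follows from connectedness of the correctness graphs: a premise-free
terminal link would leave `c` isolated, although a second terminal link exists. -/

namespace SimpleGraph

variable {V : Type*} {G : SimpleGraph V}

theorem Preconnected.eq_of_forall_not_adj (hG : G.Preconnected) {u : V}
    (hu : ∀ v, ¬ G.Adj u v) (w : V) : u = w := by
  obtain ⟨q⟩ := hG u w
  cases q with
  | nil => rfl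
  | cons h _ => exact absurd h (hu _)

theorem exists_isPath_through_of_induce_preconnected {s : Set V}
    (hs : (G.induce s).Preconnected) {c a b : V} (hc : c ∉ s) (hca : G.Adj c a)
    (ha : a ∈ s) (hb : b ∈ s) : ∃ q : G.Walk c b, q.IsPath ∧ a ∈ q.support := by
  classical
  obtain ⟨q⟩ := hs ⟨a, ha⟩ ⟨b, hb⟩
  let f := Embedding.induce (G := G) s
  have hq : (q.toPath.1.map f.toHom).IsPath := q.toPath.2.map f.injective
  have hcq : c ∉ (q.toPath.1.map f.toHom).support := by
    simp only [Walk.support_map, List.mem_map, not_exists, not_and]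
    exact fun x _ hx => hc (hx ▸ x.2)
  exact ⟨.cons hca _, hq.cons hcq, List.mem_cons_of_mem _ (Walk.start_mem_support _)⟩

end SimpleGraph

theorem exists_isTransversal {m : ℕ} (p : FinPartition m) : ∃ t, IsTransversal p t := by
  choose f hf using fun c : {c // c ∈ p.parts} => p.nonempty_of_mem_parts c.2
  refine ⟨p.parts.attach.image f, fun c hc => ⟨f ⟨c, hc⟩, ⟨by simp, hf _⟩, ?_⟩⟩
  rintro x ⟨hxt, hxc⟩
  obtain ⟨d, -, rfl⟩ := Finset.mem_image.1 hxt
  obtain rfl : (d : Finset (Fin m)) = c := p.eq_of_mem_parts d.2 hc (hf d) hxc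
  rfl

theorem exists_transversal_sel {m : ℕ} {P : Set (FinPartition m)} (hP : P.Nonempty) :
    ∃ s : Finset ℕ, ∃ p ∈ P, ∃ t, IsTransversal p t ∧ s = t.image Fin.val := by
  obtain ⟨p, hp⟩ := hP
  obtain ⟨t, ht⟩ := exists_isTransversal p
  exact ⟨_, p, hp, t, ht, rfl⟩

namespace PrePS

variable {I : Type} {Csig : I → GenConn}

theorem nonempty_partitionSwitching (S : PrePS I Csig) : Nonempty (PartitionSwitching S) := by
  choose sC hsC using fun i => exists_transversal_sel (Csig i).rules_nonempty
  choose sD hsD using fun i => exists_transversal_sel (Csig i).dualRules_nonempty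
  exact ⟨{
    sel := fun l => match S.kind l with
      | .ax | .cut => ∅
      | .tens => {0, 1}
      | .parr => {0}
      | .conn i => sC i
      | .dconn i => sD i
    valid_tens := fun l h => by simp only [h]
    valid_parr := fun l h => by simp only [h, true_or]
    valid_conn := fun l i h => by simp only [h]; exact hsC i
    valid_dconn := fun l i h => by simp only [h]; exact hsD i
    valid_other := fun l h => by rcases h with h | h <;> simp only [h] }⟩

theorem IsCLink.kind_ne_ax {S : PrePS I Csig} {l : S.Link} (hC : S.IsCLink l) :
    S.kind l ≠ .ax := by
  rcases hC.1 with h | ⟨i, h⟩ | ⟨i, h⟩ <;> simp [h]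

theorem TerminalLink.notMem_concl_of_mem_prem {S : PrePS I Csig} {l l' : S.Link}
    (hl : S.TerminalLink l) {a : S.Node} (ha : a ∈ S.prem l') : a ∉ S.concl l :=
  fun h => hl a h l' ha

end PrePS

namespace ProofStructure

variable {I : Type} {Csig : I → GenConn} (S : ProofStructure I Csig)

theorem exists_concl_eq_singleton_of_isCLink {l : S.pre.Link} (hC : S.pre.IsCLink l) :
    ∃ c, S.pre.concl l = [c] := by
  rcases hC.1 with h | ⟨i, h⟩ | ⟨i, h⟩
  · obtain ⟨-, -, c, -, hc, -⟩ := S.wf_tens l h; exact ⟨c, hc⟩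
  · obtain ⟨-, c, -, hc, -⟩ := S.wf_conn l i h; exact ⟨c, hc⟩
  · obtain ⟨-, c, -, hc, -⟩ := S.wf_dconn l i h; exact ⟨c, hc⟩

theorem mem_prem_of_selGraph_adj {sel : S.pre.Link → Finset ℕ} {l : S.pre.Link}
    (hk : S.pre.kind l ≠ .ax) {c v : S.pre.Node} (hc : c ∈ S.pre.concl l)
    (hcterm : S.pre.Terminal c) (hadj : (S.pre.selGraph sel).Adj c v) : v ∈ S.pre.prem l := by
  have hlink : ∀ l', c ∈ S.pre.concl l' → l' = l := fun l' h => (S.concl_unique c).unique h hc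
  rw [PrePS.selGraph, SimpleGraph.fromRel_adj] at hadj
  obtain ⟨-, h | h⟩ := hadj <;>
    rcases h with ⟨l', hk', hcl⟩ | ⟨l', -, hcl⟩ | ⟨l', k, -, hpk, hcl⟩
  · exact absurd (hlink l' (by simp [hcl]) ▸ hk') hk
  · exact absurd (by simp [hcl]) (hcterm l')
  · exact absurd (List.mem_of_getElem? hpk) (hcterm l')
  · exact absurd (hlink l' (by simp [hcl]) ▸ hk') hk
  · exact absurd (by simp [hcl]) (hcterm l')
  · exact hlink l' hcl ▸ List.mem_of_getElem? hpk

theorem prem_ne_nil_of_partitionProofNet (hnet : S.pre.PartitionProofNet)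
    (hcount : 1 < {l : S.pre.Link | S.pre.IsCLink l ∧ S.pre.TerminalLink l}.ncard)
    {l : S.pre.Link} (hC : S.pre.IsCLink l) (hterm : S.pre.TerminalLink l) :
    S.pre.prem l ≠ [] := by
  intro hp
  obtain ⟨c, hc⟩ := S.exists_concl_eq_singleton_of_isCLink hC
  have hcmem : c ∈ S.pre.concl l := by simp [hc]
  obtain ⟨l', ⟨hl'C, -⟩, hl'⟩ := Set.exists_ne_of_one_lt_ncard hcount l
  obtain ⟨c', hc'⟩ := S.exists_concl_eq_singleton_of_isCLink hl'C
  obtain ⟨sw⟩ := S.pre.nonempty_partitionSwitching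
  have hisolated : ∀ v, ¬ (S.pre.selGraph sw.sel).Adj c v := fun v hadj => by
    simpa [hp] using S.mem_prem_of_selGraph_adj hC.kind_ne_ax hcmem (hterm c hcmem) hadj
  obtain rfl := (hnet sw).1.preconnected.eq_of_forall_not_adj hisolated c'
  exact hl' ((S.concl_unique c).unique (by simp [hc']) hcmem)

end ProofStructure

theorem splitting_sublemma_general {I : Type} {Csig : I → GenConn}
    (S : ProofStructure I Csig)
    (hnet : S.pre.PartitionProofNet)
    (hcount : 1 < {l : S.pre.Link | S.pre.IsCLink l ∧ S.pre.TerminalLink l}.ncard)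
    (l : S.pre.Link) (hC : S.pre.IsCLink l) (hterm : S.pre.TerminalLink l)
    (c : S.pre.Node) (hc : S.pre.concl l = [c])
    (hnosplit : ¬ S.pre.Splitting l) :
    ∃ w : S.pre.Node, ¬ S.pre.Terminal w ∧ w ≠ c ∧
      ∀ a ∈ S.pre.prem l,
        ∃ q : S.pre.fullGraph.Walk c w, q.IsPath ∧ a ∈ q.support := by
  have hcmem : c ∈ S.pre.concl l := by simp [hc]
  obtain ⟨a₁, ha₁⟩ :=
    List.exists_mem_of_ne_nil _ (S.prem_ne_nil_of_partitionProofNet hnet hcount hC hterm)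
  have hconn := (not_not.1 hnosplit).preconnected
  refine ⟨a₁, fun h => h l ha₁, fun h => hterm c hcmem l (h ▸ ha₁), fun a ha => ?_⟩
  have hca : S.pre.fullGraph.Adj c a := by
    rw [PrePS.fullGraph, SimpleGraph.fromRel_adj]
    exact ⟨fun h => hterm c hcmem l (h ▸ ha), .inr <| .inr <| .inr ⟨l, ha, hcmem⟩⟩
  exact SimpleGraph.exists_isPath_through_of_induce_preconnected hconn (not_not.2 hcmem) hca
    (hterm.notMem_concl_of_mem_prem ha) (hterm.notMem_concl_of_mem_prem ha₁)

/-- **Sublemma for the splitting lemma** (cf. Laurent 2013, Lemma 2).  Let `S` be a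
proof-net in the sense of the partition switching which contains no terminal `⅋ᵏ`-link
and which contains `n > 1` terminal `C`-links (terminal `⊗`-links being counted among the
terminal `C`-links).  If a terminal `C`-link with conclusion `Cᵢ(A_{i1},…,A_{im})` is
non-splitting, then there exist a non-terminal node `w` different from the node
`Cᵢ(A_{i1},…,A_{im})` and paths `p₁,…,p_m` which start from the node
`Cᵢ(A_{i1},…,A_{im})`, pass through `A_{i1},…,A_{im}` respectively, and all meet at
`w`. -/
theorem splitting_sublemma {I : Type} {Csig : I → GenConn}
    (S : ProofStructure I Csig)
    (hnet : S.pre.PartitionProofNet)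
    (hnopar : ∀ l, S.pre.IsParLikeLink l → ¬ S.pre.TerminalLink l)
    (hcount : 1 < {l : S.pre.Link | S.pre.IsCLink l ∧ S.pre.TerminalLink l}.ncard)
    (l : S.pre.Link) (hC : S.pre.IsCLink l) (hterm : S.pre.TerminalLink l)
    (c : S.pre.Node) (hc : S.pre.concl l = [c])
    (hnosplit : ¬ S.pre.Splitting l) :
    ∃ w : S.pre.Node, ¬ S.pre.Terminal w ∧ w ≠ c ∧
      ∀ a ∈ S.pre.prem l,
        ∃ q : S.pre.fullGraph.Walk c w, q.IsPath ∧ a ∈ q.support :=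
  splitting_sublemma_general S hnet hcount l hC hterm c hc hnosplit
end

section
/- Expansion property for the Danos–Regnier switching: if S is a proof-structure that has exactly two terminal nodes C(A₁,…,Aₙ) and C*(~A₁,…,~Aₙ), where A₁,…,Aₙ are atoms, consisting of a C-link, a C*-link and, for each i, an atomic axiom link joining A_i and ~A_i, then S is correct in the sense of the Danos–Regnier switching. -/
/-! ## The Danos–Regnier switching for generalized connectives -/

/-- The partition set of a partition of `Fin m`, re-encoded as a set of sets of premise
positions. -/
def partsToNat {m : ℕ} (p : FinPartition m) : Finset (Finset ℕ) :=
  p.parts.image fun c => c.image Fin.val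

/-- A **Danos–Regnier switching** of a proof-structure: for each generalized-connective
link it selects a partition `p` in the corresponding partition set together with one
class of `p`.  (Binary `⊗`-links carry the partition `{(1),(2)}` and `⅋`-links the
partition `{(1,2)}`.) -/
structure DRSwitching {I : Type} {Csig : I → GenConn} (S : PrePS I Csig) where
  part : S.Link → Finset (Finset ℕ)
  selClass : S.Link → Finset ℕ
  sel_mem : ∀ l, (S.kind l = .tens ∨ S.kind l = .parr ∨
      (∃ i, S.kind l = .conn i) ∨ (∃ i, S.kind l = .dconn i)) → selClass l ∈ part l
  valid_tens : ∀ l, S.kind l = .tens → part l = {{0}, {1}}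
  valid_parr : ∀ l, S.kind l = .parr → part l = {({0, 1} : Finset ℕ)}
  valid_conn : ∀ l i, S.kind l = .conn i → ∃ p ∈ (Csig i).rules, part l = partsToNat p
  valid_dconn : ∀ l i, S.kind l = .dconn i → ∃ p ∈ (Csig i).dualRules, part l = partsToNat p
  valid_other : ∀ l, S.kind l = .ax ∨ S.kind l = .cut → part l = ∅ ∧ selClass l = ∅

/-- The correctness graph of a Danos–Regnier switching: the two conclusions of an axiom
link are adjacent and the two premises of a cut link are adjacent; at each switched link
the premises belonging to the same class of the chosen partition are connected to one
another (consecutive premises of a class are adjacent), and every edge from a class to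
the node of the link is deleted except one edge from the selected class (the premise of
the selected class with least position is adjacent to the conclusion). -/
def PrePS.drGraph {I : Type} {Csig : I → GenConn} (S : PrePS I Csig)
    (sw : DRSwitching S) : SimpleGraph S.Node :=
  SimpleGraph.fromRel fun a b =>
    (∃ l, S.kind l = .ax ∧ S.concl l = [a, b]) ∨
    (∃ l, S.kind l = .cut ∧ S.prem l = [a, b]) ∨
    (∃ l, ∃ c ∈ sw.part l, ∃ j ∈ c, ∃ k ∈ c, j < k ∧ (∀ x ∈ c, ¬ (j < x ∧ x < k)) ∧
      (S.prem l)[j]? = some a ∧ (S.prem l)[k]? = some b) ∨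
    (∃ l j, (∃ h : (sw.selClass l).Nonempty, j = (sw.selClass l).min' h) ∧
      (S.prem l)[j]? = some a ∧ b ∈ S.concl l)

/-- A proof-structure is **correct in the sense of the Danos–Regnier switching** iff for
every Danos–Regnier switching the associated correctness graph is connected and
acyclic. -/
def PrePS.DRProofNet {I : Type} {Csig : I → GenConn} (S : PrePS I Csig) : Prop :=
  ∀ sw : DRSwitching S, (S.drGraph sw).Connected ∧ (S.drGraph sw).IsAcyclic

/-- `S` is (isomorphic to) the proof-structure with exactly two terminal nodes
`Cᵢ(A₁,…,Aₙ)` and `Cᵢ*(~A₁,…,~Aₙ)`, where `A₁,…,Aₙ` are the atoms `a 1, …, a n`,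
consisting of a `Cᵢ`-link, a `Cᵢ*`-link, and, for each `k`, an atomic axiom link joining
`A_k` and `~A_k`. -/
def IsExpansionPS {I : Type} {Csig : I → GenConn} (i : I) (a : Fin (Csig i).arity → ℕ)
    (S : PrePS I Csig) : Prop :=
  ∃ (eN : S.Node ≃ (Fin (Csig i).arity ⊕ Fin (Csig i).arity) ⊕ Bool)
    (eL : S.Link ≃ Fin (Csig i).arity ⊕ Bool),
    (∀ k, S.label (eN.symm (.inl (.inl k))) = .pos (a k)) ∧
    (∀ k, S.label (eN.symm (.inl (.inr k))) = .neg (a k)) ∧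
    S.label (eN.symm (.inr true)) = .conn i (fun k => .pos (a k)) ∧
    S.label (eN.symm (.inr false)) = .dconn i (fun k => .neg (a k)) ∧
    (∀ k, S.kind (eL.symm (.inl k)) = .ax ∧
      S.prem (eL.symm (.inl k)) = [] ∧
      S.concl (eL.symm (.inl k)) = [eN.symm (.inl (.inl k)), eN.symm (.inl (.inr k))]) ∧
    S.kind (eL.symm (.inr true)) = .conn i ∧
    S.prem (eL.symm (.inr true)) = List.ofFn (fun k => eN.symm (.inl (.inl k))) ∧
    S.concl (eL.symm (.inr true)) = [eN.symm (.inr true)] ∧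
    S.kind (eL.symm (.inr false)) = .dconn i ∧
    S.prem (eL.symm (.inr false)) = List.ofFn (fun k => eN.symm (.inl (.inr k))) ∧
    S.concl (eL.symm (.inr false)) = [eN.symm (.inr false)]

/-! Fix a switching; it chooses `p ∈ P_C` and `q ∈ P_{C*} = P_C^⊥`. Up to the labelling of nodes,
its correctness graph has the `n` axiom edges, a path through the atoms of each class of `p` and
of each class of `q`, and one edge from each conclusion to an atom. Connectivity of the meeting
graph `G(p,q)` makes it connected, and it has `n + (n - |p|) + (n - |q|) + 2 = 2n + 1` edges since
`|p| + |q| = n + 1`, one less than its `2n + 2` vertices, so it is a tree. -/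

namespace Finset

variable {α : Type*} [LinearOrder α]

def consecutivePairs (s : Finset α) : Finset (α × α) :=
  (s ×ˢ s).filter fun jk => jk.1 < jk.2 ∧ ∀ x ∈ s, ¬(jk.1 < x ∧ x < jk.2)

theorem mem_consecutivePairs {s : Finset α} {j k : α} :
    (j, k) ∈ s.consecutivePairs ↔ j ∈ s ∧ k ∈ s ∧ j < k ∧ ∀ x ∈ s, ¬(j < x ∧ x < k) := by
  simp [consecutivePairs, and_assoc]

theorem card_consecutivePairs_le (s : Finset α) : #s.consecutivePairs ≤ #s - 1 := by
  rcases s.eq_empty_or_nonempty with rfl | hs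
  · simp [consecutivePairs]
  rw [← card_erase_of_mem (s.min'_mem hs)]
  refine card_le_card_of_injOn Prod.snd ?_ ?_
  · rintro ⟨j, k⟩ hjk
    obtain ⟨hj, hk, hjk, -⟩ := mem_consecutivePairs.1 hjk
    exact mem_erase.2 ⟨((s.min'_le j hj).trans_lt hjk).ne', hk⟩
  · rintro ⟨j, k⟩ hjk ⟨j', k'⟩ hjk' (rfl : k = k')
    obtain ⟨hj, -, hjk, hbtw⟩ := mem_consecutivePairs.1 hjk
    obtain ⟨hj', -, hjk', hbtw'⟩ := mem_consecutivePairs.1 hjk'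
    obtain h | rfl | h := lt_trichotomy j j'
    · exact (hbtw j' hj' ⟨h, hjk'⟩).elim
    · rfl
    · exact (hbtw' j hj ⟨h, hjk⟩).elim

theorem consecutivePairs_subset_insert_of_forall_lt [DecidableEq α] {s : Finset α} {a : α}
    (ha : ∀ x ∈ s, x < a) : s.consecutivePairs ⊆ (insert a s).consecutivePairs := by
  rintro ⟨j, k⟩ hjk
  obtain ⟨hj, hk, hjk, hbtw⟩ := mem_consecutivePairs.1 hjk
  refine mem_consecutivePairs.2 ⟨mem_insert_of_mem hj, mem_insert_of_mem hk, hjk, ?_⟩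
  rintro x hx ⟨hjx, hxk⟩
  rcases mem_insert.1 hx with rfl | hx
  · exact (ha k hk).not_gt hxk
  · exact hbtw x hx ⟨hjx, hxk⟩

theorem max'_consecutivePairs_insert [DecidableEq α] {s : Finset α} (hs : s.Nonempty) {a : α}
    (ha : ∀ x ∈ s, x < a) : (s.max' hs, a) ∈ (insert a s).consecutivePairs := by
  refine mem_consecutivePairs.2
    ⟨mem_insert_of_mem (s.max'_mem hs), mem_insert_self a s, ha _ (s.max'_mem hs), ?_⟩
  rintro x hx ⟨hmx, hxa⟩
  rcases mem_insert.1 hx with rfl | hx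
  · exact hxa.false
  · exact (s.le_max' x hx).not_gt hmx

end Finset

open Finset

theorem Finpartition.sum_card_sub_one_add_card_parts {α : Type*} [DecidableEq α] {s : Finset α}
    (P : Finpartition s) : ∑ C ∈ P.parts, (#C - 1) + #P.parts = #s := by
  rw [card_eq_sum_ones P.parts, ← sum_add_distrib, ← P.sum_card_parts]
  exact sum_congr rfl fun C hC => Nat.sub_add_cancel (card_pos.2 (P.nonempty_of_mem_parts hC))

namespace SimpleGraph

variable {V : Type*}

theorem reachable_of_consecutivePairs (G : SimpleGraph V) {α : Type*} [LinearOrder α] (f : α → V)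
    {s : Finset α}
    (h : ∀ jk ∈ s.consecutivePairs, G.Adj (f jk.1) (f jk.2)) {x y : α} (hx : x ∈ s)
    (hy : y ∈ s) : G.Reachable (f x) (f y) := by
  classical
  induction s using Finset.induction_on_max generalizing x y with
  | empty => simp at hx
  | insert a s ha ih =>
    have to_max : ∀ x ∈ insert a s, G.Reachable (f x) (f a) := by
      intro x hx
      rcases mem_insert.1 hx with rfl | hx
      · rfl
      · have hs : s.Nonempty := ⟨x, hx⟩
        exact (ih (fun jk hjk => h jk (consecutivePairs_subset_insert_of_forall_lt ha hjk)) hx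
          (s.max'_mem hs)).trans (h _ (max'_consecutivePairs_insert hs ha)).reachable
    exact (to_max x hx).trans (to_max y hy).symm

theorem Preconnected.reachable_of_adj_reachable (G : SimpleGraph V) {U : Type*}
    {H : SimpleGraph U} (hH : H.Preconnected) {φ : U → V}
    (hφ : ∀ u v, H.Adj u v → G.Reachable (φ u) (φ v)) (u v : U) : G.Reachable (φ u) (φ v) := by
  obtain ⟨w⟩ := hH u v
  induction w with
  | nil => rfl
  | cons huv _ ih => exact (hφ _ _ huv).trans ih

theorem Connected.isTree_of_card_edgeSet_add_one_le [Finite V] {G : SimpleGraph V}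
    (hG : G.Connected) (h : Nat.card G.edgeSet + 1 ≤ Nat.card V) : G.IsTree :=
  isTree_iff_connected_and_card.2 ⟨hG, le_antisymm h hG.card_vert_le_card_edgeSet_add_one⟩

theorem card_edgeSet_fromRel_le [Finite V] (s : Set (V × V)) :
    Nat.card (fromRel fun a b => (a, b) ∈ s).edgeSet ≤ s.ncard := by
  have hsub : (fromRel fun a b => (a, b) ∈ s).edgeSet ⊆
      (fun ab : V × V => s(ab.1, ab.2)) '' s := by
    rintro ⟨a, b⟩ hab
    rw [mem_edgeSet, fromRel_adj] at hab
    rcases hab.2 with h | h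
    · exact ⟨(a, b), h, rfl⟩
    · exact ⟨(b, a), h, Sym2.eq_swap⟩
  rw [Nat.card_coe_set_eq]
  exact (Set.ncard_le_ncard hsub).trans (Set.ncard_image_le s.toFinite)

def fromRelIso {W : Type*} (e : V ≃ W) {r : V → V → Prop} {s : W → W → Prop}
    (h : ∀ x y, s (e x) (e y) ↔ r x y) : fromRel r ≃g fromRel s where
  toEquiv := e
  map_rel_iff' := by simp [fromRel_adj, h, e.injective.ne_iff]

end SimpleGraph

section Switching

variable {n : ℕ} {V W : Type*}

/-- The oriented edges contributed to a correctness graph by a generalized link with premises `f`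
and conclusion `c`, switched to the partition `p` and a class with least element `r`. -/
def switchedPairs (p : FinPartition n) (r : Fin n) (f : Fin n → V) (c : V) : Set (V × V) :=
  insert (f r, c) (⋃ C ∈ p.parts, Prod.map f f '' C.consecutivePairs)

theorem ncard_switchedPairs_add_card_parts_le (p : FinPartition n) (r : Fin n) (f : Fin n → V)
    (c : V) : (switchedPairs p r f c).ncard + #p.parts ≤ n + 1 := by
  have hchains : (⋃ C ∈ p.parts, Prod.map f f '' C.consecutivePairs).ncard ≤
      ∑ C ∈ p.parts, (#C - 1) :=
    calc _ ≤ ∑ C ∈ p.parts, (Prod.map f f '' C.consecutivePairs).ncard :=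
          set_ncard_biUnion_le _ _
      _ ≤ ∑ C ∈ p.parts, #C.consecutivePairs :=
          sum_le_sum fun C _ => (Set.ncard_image_le C.consecutivePairs.finite_toSet).trans
            (Set.ncard_coe_finset _).le
      _ ≤ ∑ C ∈ p.parts, (#C - 1) := sum_le_sum fun C _ => C.card_consecutivePairs_le
  have hsum := p.sum_card_sub_one_add_card_parts
  rw [card_univ, Fintype.card_fin] at hsum
  have := Set.ncard_insert_le (f r, c) (⋃ C ∈ p.parts, Prod.map f f '' C.consecutivePairs)
  rw [switchedPairs]
  omega

variable {p : FinPartition n} {r : Fin n} {f : Fin n → V} {c : V}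

theorem map_mem_switchedPairs_iff {g : V → W} (hg : Function.Injective g) {a b : V} :
    (g a, g b) ∈ switchedPairs p r (fun k => g (f k)) (g c) ↔ (a, b) ∈ switchedPairs p r f c := by
  simp [switchedPairs, hg.eq_iff]

theorem SimpleGraph.reachable_of_mem_parts_of_switchedPairs {G : SimpleGraph V}
    (hG : ∀ a b, (a, b) ∈ switchedPairs p r f c → a ≠ b → G.Adj a b)
    (hf : Function.Injective f) {C : Finset (Fin n)} (hC : C ∈ p.parts) {x y : Fin n}
    (hx : x ∈ C) (hy : y ∈ C) : G.Reachable (f x) (f y) := by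
  refine G.reachable_of_consecutivePairs f (fun jk hjk => hG _ _ ?_ ?_) hx hy
  · exact Set.mem_insert_of_mem _ (Set.mem_biUnion hC (Set.mem_image_of_mem _ hjk))
  · obtain ⟨j, k⟩ := jk
    exact hf.ne (mem_consecutivePairs.1 hjk).2.2.1.ne

end Switching

section ExpansionGraph

variable {n : ℕ}

/-- `inl (inl k)`, `inl (inr k)`, `inr true` and `inr false` stand for `A_k`, `~A_k`, `C(A)` and
`C*(~A)`, as in `IsExpansionPS`. -/
abbrev ExpansionVertex (n : ℕ) := (Fin n ⊕ Fin n) ⊕ Bool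

def expansionPairs (p q : FinPartition n) (rT rF : Fin n) :
    Set (ExpansionVertex n × ExpansionVertex n) :=
  Set.range (fun k => (.inl (.inl k), .inl (.inr k))) ∪
    switchedPairs p rT (fun k => .inl (.inl k)) (.inr true) ∪
    switchedPairs q rF (fun k => .inl (.inr k)) (.inr false)

def expansionGraph (p q : FinPartition n) (rT rF : Fin n) :
    SimpleGraph (ExpansionVertex n) :=
  SimpleGraph.fromRel fun x y => (x, y) ∈ expansionPairs p q rT rF

variable {p q : FinPartition n} {rT rF : Fin n}

theorem expansionGraph_adj_of_mem {x y : ExpansionVertex n}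
    (h : (x, y) ∈ expansionPairs p q rT rF) (hne : x ≠ y) : (expansionGraph p q rT rF).Adj x y :=
  (SimpleGraph.fromRel_adj _ x y).2 ⟨hne, Or.inl h⟩

theorem expansionGraph_adj_axiom (k : Fin n) :
    (expansionGraph p q rT rF).Adj (.inl (.inl k)) (.inl (.inr k)) :=
  expansionGraph_adj_of_mem (Or.inl (Or.inl ⟨k, rfl⟩)) (by simp)

theorem expansionGraph_reachable_pos (hpq : (meetingGraph p q).Connected) (k k' : Fin n) :
    (expansionGraph p q rT rF).Reachable (.inl (.inl k)) (.inl (.inl k')) := by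
  set G := expansionGraph p q rT rF
  have hP : ∀ C ∈ p.parts, ∀ x ∈ C, ∀ y ∈ C, G.Reachable (.inl (.inl x)) (.inl (.inl y)) :=
    fun C hC x hx y hy => G.reachable_of_mem_parts_of_switchedPairs
      (fun a b h => expansionGraph_adj_of_mem (Or.inl (Or.inr h)))
      (Sum.inl_injective.comp Sum.inl_injective) hC hx hy
  have hN : ∀ D ∈ q.parts, ∀ x ∈ D, ∀ y ∈ D, G.Reachable (.inl (.inr x)) (.inl (.inr y)) :=
    fun D hD x hx y hy => G.reachable_of_mem_parts_of_switchedPairs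
      (fun a b h => expansionGraph_adj_of_mem (Or.inr h))
      (Sum.inl_injective.comp Sum.inr_injective) hD hx hy
  let φ : {C // C ∈ p.parts} ⊕ {D // D ∈ q.parts} → ExpansionVertex n
    | .inl C => .inl (.inl (C.1.min' (p.nonempty_of_mem_parts C.2)))
    | .inr D => .inl (.inr (D.1.min' (q.nonempty_of_mem_parts D.2)))
  have hmeet : ∀ (C : {C // C ∈ p.parts}) (D : {D // D ∈ q.parts}),
      (C.1 ∩ D.1).Nonempty → G.Reachable (φ (.inl C)) (φ (.inr D)) := by
    rintro ⟨C, hC⟩ ⟨D, hD⟩ ⟨x, hx⟩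
    rw [mem_inter] at hx
    exact (hP C hC _ (C.min'_mem _) x hx.1).trans
      ((expansionGraph_adj_axiom x).reachable.trans (hN D hD x hx.2 _ (D.min'_mem _)))
  have hφ := hpq.preconnected.reachable_of_adj_reachable G (φ := φ) (by
    intro u v huv
    obtain ⟨-, ⟨C, D, hCD, rfl, rfl⟩ | ⟨C, D, hCD, rfl, rfl⟩⟩ :=
      (SimpleGraph.fromRel_adj _ u v).1 huv
    · exact hmeet C D hCD
    · exact (hmeet C D hCD).symm)
  obtain ⟨C, hC, hk⟩ := p.exists_mem (mem_univ k)
  obtain ⟨C', hC', hk'⟩ := p.exists_mem (mem_univ k')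
  exact (hP C hC k hk _ (C.min'_mem _)).trans ((hφ (.inl ⟨C, hC⟩) (.inl ⟨C', hC'⟩)).trans
    (hP C' hC' _ (C'.min'_mem _) k' hk'))

theorem expansionGraph_connected (hpq : (meetingGraph p q).Connected) (rT rF : Fin n) :
    (expansionGraph p q rT rF).Connected := by
  set G := expansionGraph p q rT rF
  have hPT : ∀ k, G.Reachable (.inl (.inl k)) (.inr true) := fun k =>
    (expansionGraph_reachable_pos hpq k rT).trans
      (expansionGraph_adj_of_mem (Or.inl (Or.inr (Set.mem_insert _ _))) (by simp)).reachable
  have hT : ∀ v, G.Reachable v (.inr true) := by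
    rintro ((k | k) | _ | _)
    · exact hPT k
    · exact (expansionGraph_adj_axiom k).reachable.symm.trans (hPT k)
    · have hF : G.Adj (.inl (.inr rF)) (.inr false) :=
        expansionGraph_adj_of_mem (Or.inr (Set.mem_insert _ _)) (by simp)
      exact hF.reachable.symm.trans
        ((expansionGraph_adj_axiom rF).reachable.symm.trans (hPT rF))
    · rfl
  exact ⟨fun u v => (hT u).trans (hT v).symm⟩

theorem isTree_expansionGraph (hpq : p.Orthogonal q) (rT rF : Fin n) :
    (expansionGraph p q rT rF).IsTree := by
  refine (expansionGraph_connected hpq.1 rT rF).isTree_of_card_edgeSet_add_one_le ?_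
  set A : Set (ExpansionVertex n × ExpansionVertex n) :=
    Set.range fun k => (.inl (.inl k), .inl (.inr k))
  set B := switchedPairs p rT (fun k => (.inl (.inl k) : ExpansionVertex n)) (.inr true)
  set C := switchedPairs q rF (fun k => (.inl (.inr k) : ExpansionVertex n)) (.inr false)
  have hE : Nat.card (expansionGraph p q rT rF).edgeSet ≤ (A ∪ B ∪ C).ncard :=
    SimpleGraph.card_edgeSet_fromRel_le _
  have hA : A.ncard = n := by
    rw [Set.ncard_range_of_injective (fun a b h => by simpa using h), Nat.card_eq_fintype_card,
      Fintype.card_fin]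
  have hB : B.ncard + #p.parts ≤ n + 1 := ncard_switchedPairs_add_card_parts_le _ _ _ _
  have hC : C.ncard + #q.parts ≤ n + 1 := ncard_switchedPairs_add_card_parts_le _ _ _ _
  have hABC := (Set.ncard_union_le (A ∪ B) C).trans (add_le_add_left (Set.ncard_union_le A B) _)
  have hV : Nat.card (ExpansionVertex n) = n + n + 2 := by simp
  have := hpq.2
  omega

end ExpansionGraph

namespace PrePS

variable {I : Type} {Csig : I → GenConn} (S : PrePS I Csig) (sw : DRSwitching S)

def drLinkRel (l : S.Link) (a b : S.Node) : Prop :=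
  (S.kind l = .ax ∧ S.concl l = [a, b]) ∨
  (S.kind l = .cut ∧ S.prem l = [a, b]) ∨
  (∃ c ∈ sw.part l, ∃ j ∈ c, ∃ k ∈ c, j < k ∧ (∀ x ∈ c, ¬ (j < x ∧ x < k)) ∧
    (S.prem l)[j]? = some a ∧ (S.prem l)[k]? = some b) ∨
  (∃ j, (∃ h : (sw.selClass l).Nonempty, j = (sw.selClass l).min' h) ∧
    (S.prem l)[j]? = some a ∧ b ∈ S.concl l)

theorem drGraph_eq_fromRel_drLinkRel :
    S.drGraph sw = SimpleGraph.fromRel fun a b => ∃ l, S.drLinkRel sw l a b := by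
  simp only [drGraph, drLinkRel, exists_or]

variable {S sw} {l : S.Link}

theorem drLinkRel_iff_of_kind_eq_ax (hl : S.kind l = .ax) {u v : S.Node}
    (hconcl : S.concl l = [u, v]) {a b : S.Node} :
    S.drLinkRel sw l a b ↔ a = u ∧ b = v := by
  obtain ⟨hpart, hsel⟩ := sw.valid_other l (Or.inl hl)
  simp [drLinkRel, hl, hconcl, hpart, hsel, eq_comm]

theorem drLinkRel_iff_of_prem_eq_ofFn (hax : S.kind l ≠ .ax) (hcut : S.kind l ≠ .cut) {n : ℕ}
    {f : Fin n → S.Node} (hprem : S.prem l = List.ofFn f) {c : S.Node}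
    (hconcl : S.concl l = [c]) {p : FinPartition n} (hpart : sw.part l = partsToNat p)
    {C : Finset (Fin n)} (hC : C ∈ p.parts) (hsel : sw.selClass l = C.image Fin.val)
    {a b : S.Node} :
    S.drLinkRel sw l a b ↔ (a, b) ∈ switchedPairs p (C.min' (p.nonempty_of_mem_parts hC)) f c := by
  simp [drLinkRel, switchedPairs, hax, hcut, hprem, hconcl, hpart, hsel, partsToNat,
    mem_consecutivePairs, min'_image Fin.val_strictMono.monotone, p.nonempty_of_mem_parts hC,
    and_assoc, or_comm, eq_comm (b := a)]

end PrePS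

theorem GenConn.orthogonal_of_mem (C : GenConn) {p q : FinPartition C.arity} (hp : p ∈ C.rules)
    (hq : q ∈ C.dualRules) : p.Orthogonal q :=
  (C.orth ▸ hq : q ∈ orthCompl C.rules) p hp

/-- **Expansion property for the Danos–Regnier switching:** if `S` is a proof-structure
that has exactly two terminal nodes `C(A₁,…,Aₙ)` and `C*(~A₁,…,~Aₙ)`, where `A₁,…,Aₙ` are
atoms, consisting of a `C`-link, a `C*`-link and, for each `k`, an atomic axiom link
joining `A_k` and `~A_k`, then `S` is correct in the sense of the Danos–Regnier
switching. -/
theorem expansion_property_DR {I : Type} {Csig : I → GenConn}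
    (i : I) (a : Fin (Csig i).arity → ℕ)
    (S : ProofStructure I Csig) (hS : IsExpansionPS i a S.pre) :
    S.pre.DRProofNet := by
  obtain ⟨eN, eL, -, -, -, -, hax, hkT, hpT, hcT, hkF, hpF, hcF⟩ := hS
  intro sw
  obtain ⟨p, hp, hpartT⟩ := sw.valid_conn _ i hkT
  obtain ⟨q, hq, hpartF⟩ := sw.valid_dconn _ i hkF
  obtain ⟨CT, hCT, hselT⟩ := Finset.mem_image.1 (hpartT ▸ sw.sel_mem _ (by simp [hkT]))
  obtain ⟨CF, hCF, hselF⟩ := Finset.mem_image.1 (hpartF ▸ sw.sel_mem _ (by simp [hkF]))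
  have e : expansionGraph p q (CT.min' (p.nonempty_of_mem_parts hCT))
      (CF.min' (q.nonempty_of_mem_parts hCF)) ≃g S.pre.drGraph sw := by
    rw [S.pre.drGraph_eq_fromRel_drLinkRel]
    refine SimpleGraph.fromRelIso eN.symm fun x y => ?_
    rw [eL.exists_congr_left]
    simp only [Sum.exists, Bool.exists_bool,
      PrePS.drLinkRel_iff_of_kind_eq_ax (hax _).1 (hax _).2.2,
      PrePS.drLinkRel_iff_of_prem_eq_ofFn (by simp [hkT]) (by simp [hkT]) hpT hcT hpartT hCT
        hselT.symm,
      PrePS.drLinkRel_iff_of_prem_eq_ofFn (by simp [hkF]) (by simp [hkF]) hpF hcF hpartF hCF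
        hselF.symm,
      map_mem_switchedPairs_iff eN.symm.injective, eN.symm.apply_eq_iff_eq]
    simp only [expansionPairs, Set.mem_union, Set.mem_range, Prod.mk.injEq, eq_comm (a := x),
      eq_comm (a := y), or_assoc]
    exact or_congr_right or_comm
  have htree := e.isTree_iff.1 (isTree_expansionGraph ((Csig i).orthogonal_of_mem hp hq) _ _)
  exact ⟨htree.1, htree.2⟩
end

section
/- Non-decomposability of the Danos–Regnier 4-ary connective: there is no MLL formula α built from the binary connectives ⊗ and ⅋ over the four atoms (in any order and bracketing) whose associated partition set P_α equals P = {{(1,2),(3,4)}, {(1,3),(2,4)}}. -/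
/-! ## Non-decomposability of the Danos–Regnier 4-ary connective -/

/-- MLL formulas built from `⊗` and `⅋` whose leaves are elements of `{1,…,n}`. -/
inductive MForm (n : ℕ) : Type
  | leaf : Fin n → MForm n
  | tens : MForm n → MForm n → MForm n
  | parr : MForm n → MForm n → MForm n

/-- The multiset of leaves of an MLL formula. -/
def MForm.leaves {n : ℕ} : MForm n → Multiset (Fin n)
  | .leaf i => {i}
  | .tens α β => α.leaves + β.leaves
  | .parr α β => α.leaves + β.leaves

/-- The partition set `P_α` associated to an MLL formula `α` (partitions are represented
by their sets of classes): `P_i = {{(i)}}`, `P_{α⊗β} = {p ∪ q : p ∈ P_α, q ∈ P_β}` and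
`P_{α⅋β} = {(p \ {c}) ∪ (q \ {d}) ∪ {c ∪ d} : p ∈ P_α, q ∈ P_β, c ∈ p, d ∈ q}`. -/
def MForm.Pset {n : ℕ} : MForm n → Set (Finset (Finset (Fin n)))
  | .leaf i => {{{i}}}
  | .tens α β => {r | ∃ p ∈ α.Pset, ∃ q ∈ β.Pset, r = p ∪ q}
  | .parr α β => {r | ∃ p ∈ α.Pset, ∃ q ∈ β.Pset, ∃ c ∈ p, ∃ d ∈ q,
      r = ((p.erase c) ∪ (q.erase d)) ∪ {c ∪ d}}

deriving instance DecidableEq for MForm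

def MForm.PsetF {n : ℕ} : MForm n → Finset (Finset (Finset (Fin n)))
  | .leaf i => {{{i}}}
  | .tens a b => (a.PsetF ×ˢ b.PsetF).image fun pq => pq.1 ∪ pq.2
  | .parr a b => (a.PsetF ×ˢ b.PsetF).biUnion fun pq =>
      (pq.1 ×ˢ pq.2).image fun cd => ((pq.1.erase cd.1) ∪ (pq.2.erase cd.2)) ∪ {cd.1 ∪ cd.2}

lemma MForm.coe_PsetF {n : ℕ} (α : MForm n) : α.Pset = ↑α.PsetF := by
  induction α with
  | leaf i => simp [MForm.Pset, MForm.PsetF]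
  | tens a b iha ihb =>
      ext r
      simp [MForm.Pset, MForm.PsetF, iha, ihb, Finset.mem_image, Finset.mem_product, eq_comm]
  | parr a b iha ihb =>
      ext r
      simp [MForm.Pset, MForm.PsetF, iha, ihb, Finset.mem_image, Finset.mem_product, eq_comm]
      aesop


def MForm.leavesList {n : ℕ} : MForm n → List (Fin n)
  | .leaf i => [i]
  | .tens a b => a.leavesList ++ b.leavesList
  | .parr a b => a.leavesList ++ b.leavesList

def splits {X : Type*} (l : List X) : List (List X × List X) :=
  (List.range (l.length - 1)).map fun k => (l.take (k+1), l.drop (k+1))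

lemma mem_splits {X : Type*} (a b : List X) (ha : a ≠ []) (hb : b ≠ []) :
    (a, b) ∈ splits (a ++ b) := by
  have ha' : 0 < a.length := List.length_pos_iff.2 ha
  have hb' : 0 < b.length := List.length_pos_iff.2 hb
  refine List.mem_map.2 ⟨a.length - 1, List.mem_range.2 ?_, ?_⟩
  · simp [List.length_append]; omega
  · have : a.length - 1 + 1 = a.length := by omega
    rw [this]
    simp [List.take_left, List.drop_left]

def allFormsAux {n : ℕ} : ℕ → List (Fin n) → List (MForm n)
  | 0, _ => []
  | f+1, l =>
      (match l with | [i] => [MForm.leaf i] | _ => []) ++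
      (splits l).flatMap fun ab =>
        (allFormsAux f ab.1).flatMap fun x =>
        (allFormsAux f ab.2).flatMap fun y => [MForm.tens x y, MForm.parr x y]

@[simp] lemma leavesList_ne_nil {n : ℕ} (α : MForm n) : α.leavesList ≠ [] := by
  induction α with
  | leaf i => simp [MForm.leavesList]
  | tens a b iha ihb => simp [MForm.leavesList, iha]
  | parr a b iha ihb => simp [MForm.leavesList, iha]

lemma mem_allFormsAux {n : ℕ} (α : MForm n) :
    ∀ f, α.leavesList.length ≤ f → α ∈ allFormsAux f α.leavesList := by
  induction α with
  | leaf i =>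
      rintro (_ | f) h
      · simp [MForm.leavesList] at h
      · simp [allFormsAux, MForm.leavesList]
  | tens a b iha ihb =>
      rintro (_ | f) h
      · simp [MForm.leavesList, leavesList_ne_nil] at h
      · have hla := leavesList_ne_nil a
        have hlb := leavesList_ne_nil b
        have h1 : a.leavesList.length ≤ f := by
          have := List.length_pos_iff.2 hlb
          simp [MForm.leavesList, List.length_append] at h; omega
        have h2 : b.leavesList.length ≤ f := by
          have := List.length_pos_iff.2 hla
          simp [MForm.leavesList, List.length_append] at h; omega
        show _ ∈ allFormsAux (f+1) (a.leavesList ++ b.leavesList)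
        rw [allFormsAux]
        · refine List.mem_append_right _ ?_
          refine List.mem_flatMap.2 ⟨(a.leavesList, b.leavesList), mem_splits _ _ hla hlb, ?_⟩
          refine List.mem_flatMap.2 ⟨a, iha f h1, ?_⟩
          refine List.mem_flatMap.2 ⟨b, ihb f h2, ?_⟩
          simp
        · intro i hi
          have h3 := congrArg List.length hi
          have := List.length_pos_iff.2 hla
          have := List.length_pos_iff.2 hlb
          simp [List.length_append] at h3
          omega
  | parr a b iha ihb =>
      rintro (_ | f) h
      · simp [MForm.leavesList, leavesList_ne_nil] at h
      · have hla := leavesList_ne_nil a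
        have hlb := leavesList_ne_nil b
        have h1 : a.leavesList.length ≤ f := by
          have := List.length_pos_iff.2 hlb
          simp [MForm.leavesList, List.length_append] at h; omega
        have h2 : b.leavesList.length ≤ f := by
          have := List.length_pos_iff.2 hla
          simp [MForm.leavesList, List.length_append] at h; omega
        show _ ∈ allFormsAux (f+1) (a.leavesList ++ b.leavesList)
        rw [allFormsAux]
        · refine List.mem_append_right _ ?_
          refine List.mem_flatMap.2 ⟨(a.leavesList, b.leavesList), mem_splits _ _ hla hlb, ?_⟩
          refine List.mem_flatMap.2 ⟨a, iha f h1, ?_⟩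
          refine List.mem_flatMap.2 ⟨b, ihb f h2, ?_⟩
          simp
        · intro i hi
          have h3 := congrArg List.length hi
          have := List.length_pos_iff.2 hla
          have := List.length_pos_iff.2 hlb
          simp [List.length_append] at h3
          omega

def perms24 : List (List (Fin 4)) := [[0,1,2,3], [0,1,3,2], [0,2,1,3], [0,2,3,1], [0,3,1,2], [0,3,2,1], [1,0,2,3], [1,0,3,2], [1,2,0,3], [1,2,3,0], [1,3,0,2], [1,3,2,0], [2,0,1,3], [2,0,3,1], [2,1,0,3], [2,1,3,0], [2,3,0,1], [2,3,1,0], [3,0,1,2], [3,0,2,1], [3,1,0,2], [3,1,2,0], [3,2,0,1], [3,2,1,0]]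

lemma mem_perms24 : ∀ a b c d : Fin 4,
    ([a,b,c,d] : Multiset (Fin 4)) = (Finset.univ : Finset (Fin 4)).val →
    [a,b,c,d] ∈ perms24 := by decide

set_option maxHeartbeats 4000000 in
lemma key : ∀ L ∈ perms24, ∀ α ∈ allFormsAux 4 L,
    MForm.PsetF α ≠ ({ {({0, 1} : Finset (Fin 4)), {2, 3}},
                       {({0, 2} : Finset (Fin 4)), {1, 3}} } :
                     Finset (Finset (Finset (Fin 4)))) := by decide


lemma coe_leavesList {n : ℕ} (α : MForm n) : (↑α.leavesList : Multiset (Fin n)) = α.leaves := by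
  induction α with
  | leaf i => simp [MForm.leavesList, MForm.leaves]
  | tens a b iha ihb => simp [MForm.leavesList, MForm.leaves, ← iha, ← ihb]
  | parr a b iha ihb => simp [MForm.leavesList, MForm.leaves, ← iha, ← ihb]

lemma list_len4 {X : Type*} (l : List X) (h : l.length = 4) :
    ∃ a b c d, l = [a, b, c, d] := by
  rcases l with _ | ⟨a, _ | ⟨b, _ | ⟨c, _ | ⟨d, _ | ⟨e, t⟩⟩⟩⟩⟩ <;>
    simp_all


/-- **Non-decomposability of the Danos–Regnier 4-ary connective:** there is no MLL
formula `α` built from the binary connectives `⊗` and `⅋` over the four atoms (in any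
order and bracketing, each occurring exactly once) whose associated partition set `P_α`
equals `P = {{(1,2),(3,4)}, {(1,3),(2,4)}}` (written with `0`-based indices). -/
theorem danos_regnier_connective_non_decomposable :
    ¬ ∃ α : MForm 4,
        α.leaves = (Finset.univ : Finset (Fin 4)).val ∧
        α.Pset = ({ {({0, 1} : Finset (Fin 4)), {2, 3}},
                    {({0, 2} : Finset (Fin 4)), {1, 3}} } :
                  Set (Finset (Finset (Fin 4)))) := by
  rintro ⟨α, hl, hP⟩
  have hm : (↑α.leavesList : Multiset (Fin 4)) = (Finset.univ : Finset (Fin 4)).val := by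
    rw [coe_leavesList, hl]
  have hlen : α.leavesList.length = 4 := by
    have := congrArg Multiset.card hm
    simpa using this
  obtain ⟨a, b, c, d, hL⟩ := list_len4 _ hlen
  have hmem : α ∈ allFormsAux 4 [a, b, c, d] := by
    rw [← hL]
    exact mem_allFormsAux α 4 (le_of_eq hlen)
  have hmemp : [a, b, c, d] ∈ perms24 := mem_perms24 a b c d (by rw [← hL]; exact hm)
  exact key _ hmemp α hmem (Finset.coe_injective (by rw [← MForm.coe_PsetF, hP]; simp))
end
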